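/- Let m, n : ℕ, let H : Matrix (Fin (m+1) × Fin (n+1)) (Fin (m+1) × Fin (n+1)) T be GAP-structured, and set L := min m n. Then for every cut value c : Fin (n+1) and all indices u = (i₀,j₀), v = (i₁,j₁) with j₀ ≤ c < j₁, the closure entry satisfies the 2D square-decomposition identity (H^L) u v = Σ_{p, q : p.2 ≤ c < q.2} (H^L) u p * (H p q) * (H^L) q v, where Σ is the tropical sum (minimum over all pairs p, q whose second coordinates straddle the cut) and * is tropical multiplication (real addition). -/

import Mathlib

/-!
With unit diagonal, `(H ^ k) u v` is the cheapest walk from `u` to `v` with at most `k` proper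
steps, and a proper step of a GAP-structured matrix increases both coordinates, so a walk makes at
most `min m n` of them. Hence `C := H ^ min m n` is stable: `H * C = C * H * C = C` and
`C ≤ H ^ k` entrywise for every `k`. A walk from the left of the cut to its right crosses it for a
first time along an edge `p → q`; peeling walks from the left one step at a time bounds the cut sum
by every `(H ^ k) u v`, and `C ≤ C * H * C` gives the reverse inequality.
-/

open Finset Tropical

namespace Tropical

variable {R ι : Type*} [LinearOrderedAddCommMonoidWithTop R]

theorem sum_le_of_mem {s : Finset ι} {f : ι → Tropical R} {i : ι} (hi : i ∈ s) :
    ∑ j ∈ s, f j ≤ f i :=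
  untrop_le_iff.mp (by rw [Finset.untrop_sum']; exact Finset.inf_le hi)

theorem le_sum_of_forall_le {s : Finset ι} {f : ι → Tropical R} {a : Tropical R}
    (h : ∀ i ∈ s, a ≤ f i) : a ≤ ∑ j ∈ s, f j :=
  untrop_le_iff.mp (by
    rw [Finset.untrop_sum']
    exact Finset.le_inf fun i hi => untrop_le_iff.mpr (h i hi))

end Tropical

theorem pow_eq_pow_of_pow_succ_eq {M : Type*} [Monoid M] {x : M} {L k : ℕ}
    (h : x ^ (L + 1) = x ^ L) (hk : L ≤ k) : x ^ k = x ^ L := by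
  induction k, hk using Nat.le_induction with
  | base => rfl
  | succ k _ ih => rw [pow_succ, ih, ← pow_succ, h]

namespace Matrix

variable {R ι : Type*} [LinearOrderedAddCommMonoidWithTop R] [Fintype ι] [DecidableEq ι]
  {H : Matrix ι ι (Tropical R)}

omit [DecidableEq ι] in
theorem tropical_mul_apply_le (A B : Matrix ι ι (Tropical R)) (i k j : ι) :
    (A * B) i j ≤ A i k * B k j :=
  sum_le_of_mem (mem_univ k)

theorem tropical_pow_succ_apply_le (hdiag : ∀ z, H z z ≤ 1) (k : ℕ) (u v : ι) :
    (H ^ (k + 1)) u v ≤ (H ^ k) u v :=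
  calc (H ^ (k + 1)) u v ≤ H u u * (H ^ k) u v := by
        rw [pow_succ']; exact tropical_mul_apply_le _ _ u u v
    _ ≤ (H ^ k) u v := mul_le_of_le_one_left' (hdiag u)

theorem tropical_pow_apply_antitone (hdiag : ∀ z, H z z ≤ 1) (u v : ι) :
    Antitone fun k => (H ^ k) u v :=
  antitone_nat_of_succ_le fun k => tropical_pow_succ_apply_le hdiag k u v

-- `φ` increases strictly along every edge other than a loop, so a walk from `u` to `v` makes at
-- most `φ v - φ u` proper steps; the remaining steps are free loops.
theorem tropical_pow_succ_apply_eq_of_rank (hdiag : ∀ z, H z z = 1) (φ : ι → ℕ)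
    (hsupp : ∀ u v, u ≠ v → ¬φ u < φ v → H u v = 0) :
    ∀ (k : ℕ) (u v : ι), φ v - φ u ≤ k → (H ^ (k + 1)) u v = (H ^ k) u v := by
  intro k
  induction k with
  | zero =>
    intro u v huv
    by_cases h : u = v
    · subst h; simp [hdiag]
    · rw [zero_add, pow_one, pow_zero, one_apply_ne h, hsupp u v h (by omega)]
  | succ k ih =>
    intro u v huv
    refine le_antisymm (tropical_pow_succ_apply_le (fun z => (hdiag z).le) _ u v) ?_
    rw [pow_succ' H (k + 1), mul_apply]
    refine le_sum_of_forall_le fun r _ => ?_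
    by_cases hr : u = r
    · subst hr; rw [hdiag, one_mul]
    by_cases hφ : φ u < φ r
    · rw [ih r v (by omega), pow_succ']
      exact tropical_mul_apply_le _ _ u r v
    · rw [hsupp u r hr hφ, zero_mul]
      exact le_zero _

theorem tropical_pow_succ_eq_of_rank (hdiag : ∀ z, H z z = 1) {L : ℕ} (φ : ι → ℕ)
    (hφ : ∀ u, φ u ≤ L) (hsupp : ∀ u v, u ≠ v → ¬φ u < φ v → H u v = 0) :
    H ^ (L + 1) = H ^ L := by
  ext u v
  exact tropical_pow_succ_apply_eq_of_rank hdiag φ hsupp L u v ((Nat.sub_le _ _).trans (hφ v))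

section Cut

variable {L : ℕ} (hdiag : ∀ z, H z z ≤ 1) (hstab : H ^ (L + 1) = H ^ L)
include hdiag hstab

theorem tropical_pow_apply_le_pow_apply (k : ℕ) (a b : ι) : (H ^ L) a b ≤ (H ^ k) a b := by
  rcases le_total k L with hk | hk
  · exact tropical_pow_apply_antitone hdiag a b hk
  · rw [pow_eq_pow_of_pow_succ_eq hstab hk]

omit hdiag in
theorem tropical_pow_apply_le_mul_pow_apply (a r b : ι) :
    (H ^ L) a b ≤ H a r * (H ^ L) r b :=
  calc (H ^ L) a b = (H * H ^ L) a b := by rw [← pow_succ', hstab]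
    _ ≤ H a r * (H ^ L) r b := tropical_mul_apply_le _ _ a r b

omit hdiag in
theorem tropical_pow_apply_le_pow_mul_mul_pow_apply (u p q v : ι) :
    (H ^ L) u v ≤ (H ^ L) u p * H p q * (H ^ L) q v := by
  have hCHC : H ^ L * H * H ^ L = H ^ L := by
    rw [← pow_succ, ← pow_add, pow_eq_pow_of_pow_succ_eq hstab (by omega)]
  calc (H ^ L) u v = (H ^ L * H * H ^ L) u v := by rw [hCHC]
    _ ≤ (H ^ L * H) u q * (H ^ L) q v := tropical_mul_apply_le _ _ u q v
    _ ≤ (H ^ L) u p * H p q * (H ^ L) q v := by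
      gcongr; exact tropical_mul_apply_le _ _ u p q

variable (P : ι → Prop) [DecidablePred P]

theorem tropical_sum_cut_le_pow_apply (k : ℕ) {a b : ι} (ha : P a) (hb : ¬P b) :
    ∑ pq ∈ univ.filter (fun pq : ι × ι => P pq.1 ∧ ¬P pq.2),
        (H ^ L) a pq.1 * H pq.1 pq.2 * (H ^ L) pq.2 b ≤ (H ^ k) a b := by
  induction k generalizing a with
  | zero =>
    have hab : a ≠ b := fun h => hb (h ▸ ha)
    rw [pow_zero, one_apply_ne hab]
    exact le_zero _
  | succ k ih =>
    rw [pow_succ', mul_apply]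
    refine le_sum_of_forall_le fun r _ => ?_
    by_cases hr : P r
    · refine le_trans ?_ (mul_le_mul_right (ih hr) _)
      rw [mul_sum]
      refine le_sum_of_forall_le fun pq hpq => (sum_le_of_mem hpq).trans ?_
      calc (H ^ L) a pq.1 * H pq.1 pq.2 * (H ^ L) pq.2 b
          ≤ H a r * (H ^ L) r pq.1 * H pq.1 pq.2 * (H ^ L) pq.2 b := by
            gcongr; exact tropical_pow_apply_le_mul_pow_apply hstab a r pq.1
        _ = H a r * ((H ^ L) r pq.1 * H pq.1 pq.2 * (H ^ L) pq.2 b) := by ring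
    · have har : (a, r) ∈ univ.filter (fun pq : ι × ι => P pq.1 ∧ ¬P pq.2) :=
        mem_filter.mpr ⟨mem_univ _, ha, hr⟩
      refine (sum_le_of_mem har).trans ?_
      calc (H ^ L) a a * H a r * (H ^ L) r b
          ≤ 1 * H a r * (H ^ k) r b := by
            gcongr
            · exact (tropical_pow_apply_le_pow_apply hdiag hstab 0 a a).trans_eq (one_apply_eq a)
            · exact tropical_pow_apply_le_pow_apply hdiag hstab k r b
        _ = H a r * (H ^ k) r b := by rw [one_mul]

theorem tropical_pow_apply_eq_sum_cut {u v : ι} (hu : P u) (hv : ¬P v) :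
    (H ^ L) u v = ∑ pq ∈ univ.filter (fun pq : ι × ι => P pq.1 ∧ ¬P pq.2),
        (H ^ L) u pq.1 * H pq.1 pq.2 * (H ^ L) pq.2 v :=
  le_antisymm
    (le_sum_of_forall_le fun pq _ => tropical_pow_apply_le_pow_mul_mul_pow_apply hstab u pq.1 pq.2 v)
    (tropical_sum_cut_le_pow_apply hdiag hstab P L hu hv)

end Cut

end Matrix

theorem gap_pow_succ_min_eq {R : Type*} [LinearOrderedAddCommMonoidWithTop R] {m n : ℕ}
    (H : Matrix (Fin (m + 1) × Fin (n + 1)) (Fin (m + 1) × Fin (n + 1)) (Tropical R))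
    (hdiag : ∀ z, H z z = 1)
    (hoff : ∀ u v : Fin (m + 1) × Fin (n + 1), u ≠ v → ¬(u.1 < v.1 ∧ u.2 < v.2) → H u v = 0) :
    H ^ (min m n + 1) = H ^ min m n := by
  rcases le_total m n with h | h
  · rw [min_eq_left h]
    exact Matrix.tropical_pow_succ_eq_of_rank hdiag (fun u => u.1.val)
      (fun u => Nat.lt_succ_iff.mp u.1.isLt) fun u v huv hφ => hoff u v huv fun h => hφ h.1
  · rw [min_eq_right h]
    exact Matrix.tropical_pow_succ_eq_of_rank hdiag (fun u => u.2.val)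
      (fun u => Nat.lt_succ_iff.mp u.2.isLt) fun u v huv hφ => hoff u v huv fun h => hφ h.2

/-- 2D square decomposition for the closure of a GAP-structured
tropical matrix: with `L = min m n`, for any cut `c` on the second coordinate
and indices `u, v` with `u.2 ≤ c < v.2`,
`(H^L) u v = Σ_{p.2 ≤ c < q.2} (H^L) u p * H p q * (H^L) q v` (tropical sum). -/
theorem stmt9 (m n : ℕ)
    (H : Matrix (Fin (m+1) × Fin (n+1)) (Fin (m+1) × Fin (n+1))
      (Tropical (WithTop ℝ)))
    (hdiag : ∀ z, H z z = 1)
    (hoff : ∀ u v : Fin (m+1) × Fin (n+1), u ≠ v →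
      ¬(u.1 < v.1 ∧ u.2 < v.2) → H u v = 0) :
    ∀ (c : Fin (n+1)) (u v : Fin (m+1) × Fin (n+1)),
      u.2 ≤ c → c < v.2 →
      (H ^ (min m n)) u v =
        ∑ pq ∈ Finset.univ.filter
            (fun pq : (Fin (m+1) × Fin (n+1)) × (Fin (m+1) × Fin (n+1)) =>
              pq.1.2 ≤ c ∧ c < pq.2.2),
          (H ^ (min m n)) u pq.1 * H pq.1 pq.2 * (H ^ (min m n)) pq.2 v := by
  intro c u v hu hv
  simpa only [not_le] using Matrix.tropical_pow_apply_eq_sum_cut (fun z => (hdiag z).le)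
    (gap_pow_succ_min_eq H hdiag hoff) (fun p => p.2 ≤ c) hu (not_le.mpr hv)
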